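/- For all parameters A, B, C ∈ ℂ with C ≠ 1 and (C;q)_n ≠ 0 for all n, and all x, y ∈ ℂ with |x| < 1 and |y| < 1, the bibasic Humbert function satisfies Φ₁(A,q₁B;C;q,q₁;x,y) = Φ₁(A,B;C;q,q₁;q₁x,y) + (x(1−A)/(1−C))·Φ₁(qA,q₁B;qC;q,q₁;x,y). (Equation (2.12).) -/

import Mathlib

/-!
The q₁-base contiguity relation (q₁B;q₁)_ℓ − q₁^ℓ (B;q₁)_ℓ = (1 − q₁^ℓ)(q₁B;q₁)_{ℓ−1} makes the
termwise difference of the first two series vanish for ℓ = 0; for ℓ ≥ 1 the factor 1 − q₁^ℓ cancels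
against (q₁;q₁)_ℓ, and (A;q)_{n+1} = (1 − A)(qA;q)_n, (C;q)_{n+1} = (1 − C)(qC;q)_n turn the shifted
difference into the third series. The series may be subtracted termwise because they converge
absolutely: (z;q)_n tends to the infinite product (z;q)_∞, which is nonzero when no factor vanishes,
so (A;q)_n and 1/(C;q)_n are bounded and the terms are dominated by a multiple of |x|^ℓ |y|^k.
-/

open Complex

/-- The q-shifted factorial (z;q)_n = prod_{r=0}^{n-1} (1 - z q^r). -/
noncomputable def qPoch (q z : ℂ) (n : ℕ) : ℂ :=
  ∏ r ∈ Finset.range n, (1 - z * q ^ r)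

/-- The bibasic Humbert hypergeometric function Φ₁ on two independent bases q and q₁. -/
noncomputable def Phi1 (q q1 A B C x y : ℂ) : ℂ :=
  ∑' p : ℕ × ℕ,
    qPoch q A (p.1 + p.2) * qPoch q1 B p.1 /
      (qPoch q C (p.1 + p.2) * qPoch q1 q1 p.1 * qPoch q q p.2) * x ^ p.1 * y ^ p.2

/-- The Jackson p-derivative. -/
noncomputable def jackson (p : ℂ) (f : ℂ → ℂ) (x : ℂ) : ℂ :=
  (f x - f (p * x)) / ((1 - p) * x)

open Filter Topology

@[simp]
lemma qPoch_zero (q z : ℂ) : qPoch q z 0 = 1 := rfl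

lemma qPoch_succ (q z : ℂ) (n : ℕ) : qPoch q z (n + 1) = qPoch q z n * (1 - z * q ^ n) :=
  Finset.prod_range_succ _ _

lemma qPoch_succ' (q z : ℂ) (n : ℕ) : qPoch q z (n + 1) = (1 - z) * qPoch q (q * z) n := by
  rw [qPoch, Finset.prod_range_succ', mul_comm, pow_zero, mul_one]
  congr 1
  exact Finset.prod_congr rfl fun r _ => by ring

lemma qPoch_succ_sub_pow_mul_qPoch_succ (q z : ℂ) (n : ℕ) :
    qPoch q (q * z) (n + 1) - q ^ (n + 1) * qPoch q z (n + 1) =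
      (1 - q ^ (n + 1)) * qPoch q (q * z) n := by
  rw [qPoch_succ, qPoch_succ']
  ring

lemma qPoch_ne_zero {q z : ℂ} (hq : ‖q‖ ≤ 1) (hz : ‖z‖ < 1) (n : ℕ) : qPoch q z n ≠ 0 := by
  refine Finset.prod_ne_zero_iff.mpr fun r _ => sub_ne_zero.mpr fun h => ?_
  have : ‖z * q ^ r‖ < 1 := by
    rw [norm_mul, norm_pow]
    exact mul_lt_one_of_nonneg_of_lt_one_left (norm_nonneg z) hz (pow_le_one₀ (norm_nonneg q) hq)
  simp [← h] at this

lemma summable_norm_mul_pow {q : ℂ} (hq : ‖q‖ < 1) (z : ℂ) : Summable fun r => ‖z * q ^ r‖ := by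
  simpa only [norm_mul, norm_pow] using
    (summable_geometric_of_lt_one (norm_nonneg q) hq).mul_left ‖z‖

lemma tendsto_qPoch {q : ℂ} (hq : ‖q‖ < 1) (z : ℂ) :
    Tendsto (qPoch q z) atTop (𝓝 (∏' r, (1 - z * q ^ r))) := by
  have := (multipliable_one_add_of_summable (f := fun r => -(z * q ^ r))
    (by simpa only [norm_neg] using summable_norm_mul_pow hq z)).tendsto_prod_tprod_nat
  simp only [← sub_eq_add_neg] at this
  exact this

lemma tprod_one_sub_ne_zero {q z : ℂ} (hq : ‖q‖ < 1) (hz : ∀ n, qPoch q z n ≠ 0) :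
    ∏' r, (1 - z * q ^ r) ≠ 0 := by
  have hfactor (r : ℕ) : 1 + -(z * q ^ r) ≠ 0 := by
    rw [← sub_eq_add_neg]
    exact right_ne_zero_of_mul (qPoch_succ q z r ▸ hz (r + 1))
  simpa only [← sub_eq_add_neg] using tprod_one_add_ne_zero_of_summable hfactor
    (by simpa only [norm_neg] using summable_norm_mul_pow hq z)

lemma exists_norm_qPoch_le {q : ℂ} (hq : ‖q‖ < 1) (z : ℂ) : ∃ M, ∀ n, ‖qPoch q z n‖ ≤ M := by
  obtain ⟨M, hM⟩ := (tendsto_qPoch hq z).norm.bddAbove_range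
  exact ⟨M, fun n => hM ⟨n, rfl⟩⟩

lemma exists_norm_inv_qPoch_le {q z : ℂ} (hq : ‖q‖ < 1) (hz : ∀ n, qPoch q z n ≠ 0) :
    ∃ M, ∀ n, ‖(qPoch q z n)⁻¹‖ ≤ M := by
  obtain ⟨M, hM⟩ := ((tendsto_qPoch hq z).inv₀ (tprod_one_sub_ne_zero hq hz)).norm.bddAbove_range
  exact ⟨M, fun n => hM ⟨n, rfl⟩⟩

noncomputable def phi1Term (q q1 A B C x y : ℂ) (p : ℕ × ℕ) : ℂ :=
  qPoch q A (p.1 + p.2) * qPoch q1 B p.1 /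
    (qPoch q C (p.1 + p.2) * qPoch q1 q1 p.1 * qPoch q q p.2) * x ^ p.1 * y ^ p.2

lemma Phi1_eq_tsum_phi1Term (q q1 A B C x y : ℂ) :
    Phi1 q q1 A B C x y = ∑' p, phi1Term q q1 A B C x y p := rfl

lemma summable_mul_pow_mul_pow {c : ℕ × ℕ → ℂ} {K : ℝ} (hc : ∀ p, ‖c p‖ ≤ K) {x y : ℂ}
    (hx : ‖x‖ < 1) (hy : ‖y‖ < 1) : Summable fun p : ℕ × ℕ => c p * x ^ p.1 * y ^ p.2 := by
  have hgeom : Summable fun p : ℕ × ℕ => K * (‖x‖ ^ p.1 * ‖y‖ ^ p.2) :=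
    ((summable_geometric_of_lt_one (norm_nonneg x) hx).mul_of_nonneg
      (summable_geometric_of_lt_one (norm_nonneg y) hy) (fun _ => by positivity)
      (fun _ => by positivity)).mul_left K
  refine Summable.of_norm_bounded hgeom fun p => ?_
  rw [norm_mul, norm_mul, norm_pow, norm_pow, mul_assoc]
  gcongr
  exact hc p

lemma summable_phi1Term {q q1 : ℂ} (hq : ‖q‖ < 1) (hq1 : ‖q1‖ < 1) (A B : ℂ) {C : ℂ}
    (hC : ∀ n, qPoch q C n ≠ 0) {x y : ℂ} (hx : ‖x‖ < 1) (hy : ‖y‖ < 1) :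
    Summable (phi1Term q q1 A B C x y) := by
  obtain ⟨MA, hA⟩ := exists_norm_qPoch_le hq A
  obtain ⟨MB, hB⟩ := exists_norm_qPoch_le hq1 B
  obtain ⟨MC, hC'⟩ := exists_norm_inv_qPoch_le hq hC
  obtain ⟨M1, h1⟩ := exists_norm_inv_qPoch_le hq1 (qPoch_ne_zero hq1.le hq1)
  obtain ⟨M, h⟩ := exists_norm_inv_qPoch_le hq (qPoch_ne_zero hq.le hq)
  refine summable_mul_pow_mul_pow (K := MA * MB * MC * M1 * M) (fun p => ?_) hx hy
  have hMA : 0 ≤ MA := (norm_nonneg _).trans (hA 0)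
  have hMB : 0 ≤ MB := (norm_nonneg _).trans (hB 0)
  have hMC : 0 ≤ MC := (norm_nonneg _).trans (hC' 0)
  have hM1 : 0 ≤ M1 := (norm_nonneg _).trans (h1 0)
  calc _ = ‖qPoch q A (p.1 + p.2)‖ * ‖qPoch q1 B p.1‖ * ‖(qPoch q C (p.1 + p.2))⁻¹‖ *
        ‖(qPoch q1 q1 p.1)⁻¹‖ * ‖(qPoch q q p.2)⁻¹‖ := by
          simp only [div_eq_mul_inv, mul_inv, norm_mul]; ring
    _ ≤ MA * MB * MC * M1 * M := by gcongr; exacts [hA _, hB _, hC' _, h1 _, h _]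

lemma tsum_comp_succ_fst {α : Type*} [AddCommMonoid α] [TopologicalSpace α] {f : ℕ × ℕ → α}
    (hf : ∀ k, f (0, k) = 0) : ∑' p : ℕ × ℕ, f (p.1 + 1, p.2) = ∑' p, f p := by
  refine (Function.Injective.tsum_eq (g := fun p : ℕ × ℕ => (p.1 + 1, p.2))
    (fun a b h => by simpa [Prod.ext_iff] using h) fun p hp => ?_)
  obtain ⟨_ | ℓ, k⟩ := p
  · exact absurd (hf k) hp
  · exact ⟨(ℓ, k), rfl⟩

lemma phi1Term_succ_fst_sub (q q1 A B C x y : ℂ) (ℓ k : ℕ) (hC : qPoch q C (ℓ + k + 1) ≠ 0)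
    (hq1 : qPoch q1 q1 (ℓ + 1) ≠ 0) (hq : qPoch q q k ≠ 0) :
    phi1Term q q1 A (q1 * B) C x y (ℓ + 1, k) - phi1Term q q1 A B C (q1 * x) y (ℓ + 1, k) =
      x * (1 - A) / (1 - C) * phi1Term q q1 (q * A) (q1 * B) (q * C) x y (ℓ, k) := by
  have hB := qPoch_succ_sub_pow_mul_qPoch_succ q1 B ℓ
  simp only [phi1Term, add_right_comm ℓ 1 k, qPoch_succ' q A, qPoch_succ' q C] at hC ⊢
  have hq1' : qPoch q1 q1 (ℓ + 1) = qPoch q1 q1 ℓ * (1 - q1 ^ (ℓ + 1)) := by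
    rw [qPoch_succ, ← pow_succ']
  rw [hq1'] at hq1 ⊢
  obtain ⟨h1C, hqC⟩ := mul_ne_zero_iff.mp hC
  obtain ⟨hq1ℓ, hpow⟩ := mul_ne_zero_iff.mp hq1
  generalize qPoch q (q * A) (ℓ + k) = P
  generalize qPoch q (q * C) (ℓ + k) = Q at hqC ⊢
  field_simp
  linear_combination (1 - A) * P * y ^ k * x ^ (ℓ + 1) * hB

theorem stmt11_general (q q1 A B C x y : ℂ)
    (hq1 : ‖q‖ < 1)
    (hq11 : ‖q1‖ < 1)
    (hC : ∀ n : ℕ, qPoch q C n ≠ 0)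
    (hx : ‖x‖ < 1) (hy : ‖y‖ < 1) :
    Phi1 q q1 A (q1 * B) C x y =
      Phi1 q q1 A B C (q1 * x) y
        + (x * (1 - A) / (1 - C)) * Phi1 q q1 (q * A) (q1 * B) (q * C) x y := by
  have hq1x : ‖q1 * x‖ < 1 := by
    rw [norm_mul]
    exact mul_lt_one_of_nonneg_of_lt_one_left (norm_nonneg q1) hq11 hx.le
  have hzero : ∀ k, phi1Term q q1 A (q1 * B) C x y (0, k) - phi1Term q q1 A B C (q1 * x) y (0, k)
      = 0 := by
    simp [phi1Term]
  have hsucc (p : ℕ × ℕ) :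
      phi1Term q q1 A (q1 * B) C x y (p.1 + 1, p.2) - phi1Term q q1 A B C (q1 * x) y (p.1 + 1, p.2)
        = x * (1 - A) / (1 - C) * phi1Term q q1 (q * A) (q1 * B) (q * C) x y p :=
    phi1Term_succ_fst_sub q q1 A B C x y p.1 p.2 (hC _) (qPoch_ne_zero hq11.le hq11 _)
      (qPoch_ne_zero hq1.le hq1 _)
  simp only [Phi1_eq_tsum_phi1Term]
  rw [← sub_eq_iff_eq_add', ← (summable_phi1Term hq1 hq11 A _ hC hx hy).tsum_sub
    (summable_phi1Term hq1 hq11 A B hC hq1x hy), ← tsum_comp_succ_fst hzero, ← tsum_mul_left]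
  exact tsum_congr hsucc

theorem stmt11 (q q1 A B C x y : ℂ)
    (hq0 : 0 < ‖q‖) (hq1 : ‖q‖ < 1)
    (hq10 : 0 < ‖q1‖) (hq11 : ‖q1‖ < 1)
    (hC : ∀ n : ℕ, qPoch q C n ≠ 0)
    (hC1 : C ≠ 1) (hx : ‖x‖ < 1) (hy : ‖y‖ < 1) :
    Phi1 q q1 A (q1 * B) C x y =
      Phi1 q q1 A B C (q1 * x) y
        + (x * (1 - A) / (1 - C)) * Phi1 q q1 (q * A) (q1 * B) (q * C) x y :=
  stmt11_general q q1 A B C x y hq1 hq11 hC hx hy
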